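/- arXiv:2112.14049 — 4 statements merged into one kernel-verified Lean document; each statement's English description precedes it below -/
import Mathlib

section
/- If S is a locale (complete Heyting algebra) with the entailment relation defined by U ▷ a iff ⋀U ≤ a, then a map j : S → S is a nucleus over this entailment relation (i.e., satisfies rules Lj and Rj) if and only if j is a nucleus on the locale S (i.e., a closure operator satisfying ja ∧ jb ≤ j(a ∧ b)). -/
/-- A single-conclusion entailment relation on `S`. -/
structure IsEntailment {S : Type*} [DecidableEq S] (E : Finset S → S → Prop) : Prop where
  refl : ∀ (U : Finset S) (a : S), a ∈ U → E U a
  mono : ∀ (U U' : Finset S) (a : S), E U a → E (U ∪ U') a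
  cut : ∀ (V V' : Finset S) (a b : S), E V b → E (insert b V') a → E (V ∪ V') a

/-- A nucleus over an entailment relation. -/
structure IsNucleus {S : Type*} [DecidableEq S] (E : Finset S → S → Prop) (j : S → S) : Prop where
  lj : ∀ (U : Finset S) (a b : S), E (insert a U) (j b) → E (insert (j a) U) (j b)
  rj : ∀ (U : Finset S) (b : S), E U b → E U (j b)

/-!
Rule (Rj) at `{a} ▷ a` gives `a ≤ ja`, and (Lj) with empty context is the closure property
`a ≤ jb → ja ≤ jb`. Starting from `a, b ▷ j(a ∧ b)`, two applications of (Lj) replace `a`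
and `b` by `ja` and `jb`, which is `ja ∧ jb ≤ j(a ∧ b)`. Conversely, if `a ∧ ⋀U ≤ jb` then
`ja ∧ ⋀U ≤ ja ∧ j(⋀U) ≤ j(a ∧ ⋀U) ≤ jb`, which is (Lj); (Rj) is `b ≤ jb`.
-/

section InfEntails

variable {α : Type*} [SemilatticeInf α] [OrderTop α] [DecidableEq α]

def InfEntails (U : Finset α) (a : α) : Prop := U.inf id ≤ a

namespace IsNucleus

variable {j : α → α}

theorem le_apply (hj : IsNucleus InfEntails j) (a : α) : a ≤ j a := by
  simpa [InfEntails] using hj.rj {a} a (by simp [InfEntails])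

theorem apply_le_apply_of_le (hj : IsNucleus InfEntails j) {a b : α} (h : a ≤ j b) :
    j a ≤ j b := by
  simpa [InfEntails] using hj.lj ∅ a b (by simpa [InfEntails] using h)

theorem inf_apply_le_apply_inf (hj : IsNucleus InfEntails j) (a b : α) :
    j a ⊓ j b ≤ j (a ⊓ b) := by
  have hab : InfEntails {a, b} (j (a ⊓ b)) := hj.rj _ _ (by simp [InfEntails])
  have hjab : InfEntails {j a, b} (j (a ⊓ b)) := hj.lj {b} a _ hab
  have hjajb : InfEntails {j b, j a} (j (a ⊓ b)) :=
    hj.lj {j a} b _ (by simpa [InfEntails, inf_comm] using hjab)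
  simpa [InfEntails, inf_comm] using hjajb

end IsNucleus

theorem isNucleus_infEntails_of_closure {j : α → α} (le_apply : ∀ a, a ≤ j a)
    (apply_le_apply_of_le : ∀ a b, a ≤ j b → j a ≤ j b)
    (inf_apply_le_apply_inf : ∀ a b, j a ⊓ j b ≤ j (a ⊓ b)) :
    IsNucleus InfEntails j where
  lj U a b h :=
    calc (insert (j a) U).inf id = j a ⊓ U.inf id := by simp
      _ ≤ j a ⊓ j (U.inf id) := inf_le_inf_left _ (le_apply _)
      _ ≤ j (a ⊓ U.inf id) := inf_apply_le_apply_inf _ _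
      _ ≤ j b := apply_le_apply_of_le _ _ (by simpa [InfEntails] using h)
  rj _ b h := le_trans h (le_apply b)

end InfEntails

/-- over a locale with the entailment relation `U ▷ a iff ⋀U ≤ a`,
a map `j` is a nucleus over the entailment relation iff it is a nucleus on the
locale (a closure operator satisfying `ja ⊓ jb ≤ j(a ⊓ b)`). -/
theorem nucleus_entailment_iff_nucleus_locale {S : Type*} [Order.Frame S] [DecidableEq S]
    (j : S → S) :
    IsNucleus (fun (U : Finset S) (a : S) => U.inf id ≤ a) j ↔
      ((∀ a : S, a ≤ j a) ∧ (∀ a b : S, a ≤ j b → j a ≤ j b) ∧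
        (∀ a b : S, j a ⊓ j b ≤ j (a ⊓ b))) :=
  ⟨fun hj => ⟨hj.le_apply, fun _ _ => hj.apply_le_apply_of_le, hj.inf_apply_le_apply_inf⟩,
    fun ⟨le_apply, apply_le_apply_of_le, inf_apply_le_apply_inf⟩ =>
      isNucleus_infEntails_of_closure le_apply apply_le_apply_of_le inf_apply_le_apply_inf⟩
end

section
/- Let S carry an algebraic structure with a unary self-inverse operation j (j ∘ j = id), and let ▷ be the entailment relation of substructures, generated inductively by the axioms a₁,...,aₙ ▷ f(a₁,...,aₙ) for every n-ary operation f (including j). Then j is a nucleus over ▷. -/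
/-- Generators of the entailment relation of substructures: all axioms
`a₁,…,aₙ ▷ f(a₁,…,aₙ)` for the operations of the structure (including `j`). -/
def SubstructureGen {S : Type*} [DecidableEq S] {I : Type*} (n : I → ℕ)
    (f : ∀ i, (Fin (n i) → S) → S) (j : S → S) (E : Finset S → S → Prop) : Prop :=
  IsEntailment E ∧
  (∀ (i : I) (args : Fin (n i) → S), E (Finset.image args Finset.univ) (f i args)) ∧
  (∀ a : S, E {a} (j a))

/-- The least entailment relation satisfying the substructure axioms. -/
def SubstructureDerives {S : Type*} [DecidableEq S] {I : Type*} (n : I → ℕ)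
    (f : ∀ i, (Fin (n i) → S) → S) (j : S → S) (U : Finset S) (a : S) : Prop :=
  ∀ E : Finset S → S → Prop, SubstructureGen n f j E → E U a

/-! Since `j` is an involution, the axiom `j a ▷ j (j a)` reads `j a ▷ a`, so (Lj) is a cut with it
and (Rj) a cut with the axiom `b ▷ j b`. Both properties hold in every relation satisfying the
axioms, hence in their intersection, the least one. -/

namespace IsEntailment

variable {S : Type*} [DecidableEq S] {E : Finset S → S → Prop}

theorem cut_insert (hE : IsEntailment E) {U : Finset S} {a b c : S}
    (hca : E {c} a) (h : E (insert a U) b) : E (insert c U) b := by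
  rw [Finset.insert_eq]
  exact hE.cut {c} U b a hca h

theorem cut_singleton (hE : IsEntailment E) {U : Finset S} {b c : S}
    (hb : E U b) (hbc : E {b} c) : E U c := by
  simpa using hE.cut U ∅ c b hb hbc

theorem isNucleus_of_involutive (hE : IsEntailment E) {j : S → S} (hj : Function.Involutive j)
    (hax : ∀ a, E {a} (j a)) : IsNucleus E j where
  lj _ a _ h := hE.cut_insert (by simpa only [hj a] using hax (j a)) h
  rj _ b h := hE.cut_singleton h (hax b)

end IsEntailment

theorem IsNucleus.sInf {S : Type*} [DecidableEq S] {P : (Finset S → S → Prop) → Prop}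
    {j : S → S} (hP : ∀ E, P E → IsNucleus E j) :
    IsNucleus (fun U a => ∀ E, P E → E U a) j where
  lj U a b h E hE := (hP E hE).lj U a b (h E hE)
  rj U b h E hE := (hP E hE).rj U b (h E hE)

/-- if `j` is a self-inverse unary operation of the structure, then
`j` is a nucleus over the entailment relation of substructures. -/
theorem selfInverse_nucleus_substructures {S : Type*} [DecidableEq S] {I : Type*}
    (n : I → ℕ) (f : ∀ i, (Fin (n i) → S) → S) (j : S → S)
    (hjj : ∀ a : S, j (j a) = a) :
    IsNucleus (SubstructureDerives n f j) j :=
  IsNucleus.sInf fun _ hE => hE.1.isNucleus_of_involutive hjj hE.2.2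
end

section
/- Let ▷ be an entailment relation inductively generated by axioms and rules and j a nucleus over ▷. Then ▷^j is conservative over ▷_j (i.e., ▷^j ⊆ ▷_j, hence ▷^j = ▷_j) if and only if every non-axiom rule generating ▷ is compatible with j, meaning that each such rule also holds for ▷_j. -/
/-- A rule (instance): a set of premisses together with a conclusion. -/
abbrev EntRule (S : Type*) := Set (Finset S × S) × (Finset S × S)

/-- A relation satisfies a rule if the conclusion holds whenever all premisses do. -/
def RuleSat {S : Type*} (E : Finset S → S → Prop) (r : EntRule S) : Prop :=
  (∀ p ∈ r.1, E p.1 p.2) → E r.2.1 r.2.2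

/-- The entailment relation inductively generated by a set of axioms and rules. -/
def Derives {S : Type*} [DecidableEq S] (Rules : Set (EntRule S))
    (U : Finset S) (a : S) : Prop :=
  ∀ E : Finset S → S → Prop, IsEntailment E → (∀ r ∈ Rules, RuleSat E r) → E U a

/-- The stability axioms `ja ▷ a`, viewed as rules without premisses. -/
def StabRules {S : Type*} (j : S → S) : Set (EntRule S) :=
  {r | ∃ a : S, r = (∅, ({j a}, a))}

/-!
`▷_j` is an entailment relation by the nucleus laws, and it satisfies the axioms of `▷` (by `rj`)
and the stability axioms `ja ▷ a` (by reflexivity); so it contains the least such relation `▷^j`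
exactly when it also satisfies the remaining rules. Conversely, in `▷^j` the stability axioms
turn `U ▷ ja` into `U ▷ a`, so the premisses of a rule holding in `▷_j` hold in `▷^j`; the rule
then holds in `▷^j`, and conservation carries its conclusion back to `▷_j`.
-/

section

variable {S : Type*} [DecidableEq S]

namespace Derives

theorem isEntailment (Rules : Set (EntRule S)) : IsEntailment (Derives Rules) where
  refl U a h _ hE _ := hE.refl U a h
  mono U U' a h E hE hR := hE.mono U U' a (h E hE hR)
  cut V V' a b h₁ h₂ E hE hR := hE.cut V V' a b (h₁ E hE hR) (h₂ E hE hR)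

theorem ruleSat {Rules : Set (EntRule S)} {r : EntRule S} (hr : r ∈ Rules) :
    RuleSat (Derives Rules) r :=
  fun hprem E hE hR => hR r hr fun p hp => hprem p hp E hE hR

theorem mono_rules {Rules Rules' : Set (EntRule S)} (h : Rules ⊆ Rules') {U : Finset S} {a : S}
    (hd : Derives Rules U a) : Derives Rules' U a :=
  fun E hE hR => hd E hE fun r hr => hR r (h hr)

theorem of_derives_nucleus {Rules : Set (EntRule S)} {j : S → S} (hstab : StabRules j ⊆ Rules)
    {U : Finset S} {a : S} (hd : Derives Rules U (j a)) : Derives Rules U a := by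
  have hja : Derives Rules {j a} a :=
    ruleSat (hstab ⟨a, rfl⟩) fun p hp => absurd hp (Set.notMem_empty p)
  simpa using (isEntailment Rules).cut U ∅ a (j a) hd (by simpa using hja)

end Derives

namespace IsNucleus

variable {E : Finset S → S → Prop} {j : S → S}

theorem isEntailment_comp (hj : IsNucleus E j) (hE : IsEntailment E) :
    IsEntailment fun U a => E U (j a) where
  refl U a h := hj.rj U a (hE.refl U a h)
  mono U U' a h := hE.mono U U' (j a) h
  cut V V' a b h₁ h₂ := hE.cut V V' (j a) (j b) h₁ (hj.lj V' b a h₂)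

theorem ruleSat_comp_of_fst_eq_empty (hj : IsNucleus E j) {r : EntRule S} (hr : RuleSat E r)
    (h : r.1 = ∅) : RuleSat (fun U a => E U (j a)) r :=
  fun _ => hj.rj _ _ (hr fun p hp => absurd (h ▸ hp) (Set.notMem_empty p))

end IsNucleus

theorem ruleSat_comp_of_mem_stabRules {E : Finset S → S → Prop} {j : S → S} (hE : IsEntailment E)
    {r : EntRule S} (hr : r ∈ StabRules j) : RuleSat (fun U a => E U (j a)) r := by
  obtain ⟨b, rfl⟩ := hr
  exact fun _ => hE.refl {j b} (j b) (Finset.mem_singleton_self _)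

end

/-- `▷^j` is conservative over `▷_j` if and only if every
non-axiom rule generating `▷` is compatible with `j` (holds for `▷_j`). -/
theorem conservation_iff_compatible {S : Type*} [DecidableEq S]
    (Rules : Set (EntRule S)) (j : S → S)
    (hj : IsNucleus (Derives Rules) j) :
    (∀ (U : Finset S) (a : S), Derives (Rules ∪ StabRules j) U a →
        Derives Rules U (j a)) ↔
      (∀ r ∈ Rules, r.1 ≠ ∅ →
        RuleSat (fun (U : Finset S) (a : S) => Derives Rules U (j a)) r) := by
  constructor
  · intro hcons r hr _ hprem
    refine hcons _ _ (Derives.ruleSat (Set.mem_union_left _ hr) fun p hp => ?_)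
    exact ((hprem p hp).mono_rules Set.subset_union_left).of_derives_nucleus
      Set.subset_union_right
  · intro hcomp U a hd
    refine hd _ (hj.isEntailment_comp (Derives.isEntailment Rules)) ?_
    rintro r (hr | hr)
    · rcases eq_or_ne r.1 ∅ with hax | hne
      · exact hj.ruleSat_comp_of_fst_eq_empty (Derives.ruleSat hr) hax
      · exact hcomp r hr hne
    · exact ruleSat_comp_of_mem_stabRules (Derives.isEntailment Rules) hr
end

section
/- Let ▷ be an entailment relation with nucleus j, and let r be a rule with premisses U₁ ▷ b₁, ..., Uₙ ▷ bₙ and conclusion U ▷ b that holds for ▷. Then r is compatible with j (holds for ▷_j) if and only if for every instance of r there exists β ∈ S with β ▷ jb such that from the premisses U₁ ▷ jb₁, ..., Uₙ ▷ jbₙ one may derive U ▷ β. -/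
namespace IsEntailment

variable {S : Type*} [DecidableEq S] {E : Finset S → S → Prop}

theorem trans_singleton (hE : IsEntailment E) {U : Finset S} {a b : S}
    (hUb : E U b) (hba : E {b} a) : E U a := by
  simpa using hE.cut U ∅ a b hUb hba

theorem ruleSat_comp_iff_exists (hE : IsEntailment E) (g : S → S) (inst : EntRule S) :
    RuleSat (fun U a => E U (g a)) inst ↔
      ∃ β : S, E {β} (g inst.2.2) ∧ ((∀ p ∈ inst.1, E p.1 (g p.2)) → E inst.2.1 β) := by
  constructor
  · intro h
    exact ⟨g inst.2.2, hE.refl _ _ (Finset.mem_singleton_self _), h⟩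
  · rintro ⟨β, hβ, hU⟩ hprem
    exact hE.trans_singleton (hU hprem) hβ

end IsEntailment

theorem compatible_iff_beta_criterion_general {S : Type*} [DecidableEq S]
    (E : Finset S → S → Prop) (j : S → S) (r : Set (EntRule S))
    (hE : IsEntailment E) :
    (∀ inst ∈ r, RuleSat (fun (U : Finset S) (a : S) => E U (j a)) inst) ↔
      (∀ inst ∈ r, ∃ β : S, E {β} (j inst.2.2) ∧
        ((∀ p ∈ inst.1, E p.1 (j p.2)) → E inst.2.1 β)) :=
  forall₂_congr fun inst _ => hE.ruleSat_comp_iff_exists j inst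

/-- a rule `r` (given as its set of instances) holding for `▷` is
compatible with `j` iff for every instance with conclusion `U ▷ b` there is a
`β` with `β ▷ jb` such that `U ▷ β` is derivable from the premisses
`U₁ ▷ jb₁, …, Uₙ ▷ jbₙ`. -/
theorem compatible_iff_beta_criterion {S : Type*} [DecidableEq S]
    (E : Finset S → S → Prop) (j : S → S) (r : Set (EntRule S))
    (hE : IsEntailment E) (hj : IsNucleus E j)
    (hr : ∀ inst ∈ r, RuleSat E inst) :
    (∀ inst ∈ r, RuleSat (fun (U : Finset S) (a : S) => E U (j a)) inst) ↔
      (∀ inst ∈ r, ∃ β : S, E {β} (j inst.2.2) ∧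
        ((∀ p ∈ inst.1, E p.1 (j p.2)) → E inst.2.1 β)) :=
  compatible_iff_beta_criterion_general E j r hE
end
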